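/- Let f₁,…,f_n, g₁,…,g_n ∈ L² and let π : L² → L²/H² be the quotient map. If {π(f₁),…,π(f_n)} are linearly independent and the finite-rank operator Σ_{i=1}^n (H_{f_i}1) ⊗ (H_{g_i}* z̄) from H² to [H²]^⊥ is zero, then g_i ∈ H² for every i = 1,…,n. -/

import Mathlib

open MeasureTheory Filter Topology ComplexConjugate ENNReal

noncomputable section

namespace HTTO

instance fact2pi : Fact (0 < 2 * Real.pi) := ⟨Real.two_pi_pos⟩

/-- The unit circle, modeled additively as `ℝ / 2πℤ`; the point `x` corresponds to `e^{ix}`. -/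
abbrev Circ : Type := AddCircle (2 * Real.pi)

/-- Normalized Haar (Lebesgue) measure on the circle. -/
abbrev hm : Measure Circ := AddCircle.haarAddCircle

/-- The Lebesgue space `L²` of the circle. -/
abbrev L2 : Type := Lp ℂ 2 hm

/-- The Lebesgue space `L^∞` of the circle. -/
abbrev Linf : Type := Lp ℂ ⊤ hm

/-- The `n`-th Fourier coefficient, as a continuous linear functional on `L²`. -/
def coeffCLM (n : ℤ) : L2 →L[ℂ] ℂ :=
  LinearMap.mkContinuous
    { toFun := fun f => fourierBasis.repr f n
      map_add' := fun f g => by simp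
      map_smul' := fun c f => by simp }
    1
    (fun f => by
      rw [one_mul]
      calc ‖fourierBasis.repr f n‖ ≤ ‖fourierBasis.repr f‖ :=
            lp.norm_apply_le_norm (by norm_num) _ n
        _ = ‖f‖ := by simp)

/-- The Hardy space `H²`: the subspace of `L²` of functions whose negative Fourier
coefficients vanish. -/
def H2 : Submodule ℂ L2 := ⨅ n : {m : ℤ // m < 0}, LinearMap.ker (coeffCLM n.1).toLinearMap

theorem isClosed_H2 : IsClosed (H2 : Set L2) := by
  have h : ((H2 : Submodule ℂ L2) : Set L2)
      = ⋂ n : {m : ℤ // m < 0}, ↑(LinearMap.ker (coeffCLM n.1).toLinearMap) := Submodule.coe_iInf _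
  rw [h]
  exact isClosed_iInter fun n => ContinuousLinearMap.isClosed_ker _

instance : CompleteSpace H2 := isClosed_H2.completeSpace_coe

/-- The orthogonal (Szegő/Riesz) projection `P` of `L²` onto `H²`,
as an endomorphism of `L²`. -/
def Pp : L2 →L[ℂ] L2 := H2.subtypeL.comp H2.orthogonalProjectionOnto

/-- The `L²` function `f * g`, for `f ∈ L^∞` and `g ∈ L²`, is in `L²`. -/
theorem mulMem (f : Linf) (g : L2) : MemLp (⇑f • ⇑g) 2 hm :=
  (Lp.memLp g).smul (Lp.memLp f)

/-- Pointwise multiplication `g ↦ f g` of an `L²` function by an `L^∞` function. -/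
def mulFun (f : Linf) (g : L2) : L2 := (mulMem f g).toLp (⇑f • ⇑g)

theorem coeFn_mulFun (f : Linf) (g : L2) : mulFun f g =ᵐ[hm] ⇑f • ⇑g :=
  MemLp.coeFn_toLp _

theorem mulFun_add (f : Linf) (g₁ g₂ : L2) :
    mulFun f (g₁ + g₂) = mulFun f g₁ + mulFun f g₂ := by
  apply Lp.ext
  filter_upwards [coeFn_mulFun f (g₁ + g₂), coeFn_mulFun f g₁, coeFn_mulFun f g₂,
    Lp.coeFn_add (mulFun f g₁) (mulFun f g₂), Lp.coeFn_add g₁ g₂] with x h1 h2 h3 h4 h5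
  simp only [h1, h4, Pi.add_apply, h2, h3, Pi.smul_apply, h5, smul_eq_mul, Pi.mul_apply, mul_add]

theorem mulFun_smul (f : Linf) (c : ℂ) (g : L2) :
    mulFun f (c • g) = c • mulFun f g := by
  apply Lp.ext
  filter_upwards [coeFn_mulFun f (c • g), coeFn_mulFun f g,
    Lp.coeFn_smul c (mulFun f g), Lp.coeFn_smul c g] with x h1 h2 h3 h4
  simp only [h1, h3, Pi.smul_apply, h2, h4, smul_eq_mul, Pi.mul_apply]
  ring

theorem mulFun_norm (f : Linf) (g : L2) : ‖mulFun f g‖ ≤ ‖f‖ * ‖g‖ := by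
  rw [mulFun, Lp.norm_toLp]
  calc (eLpNorm (⇑f • ⇑g) 2 hm).toReal
      ≤ (eLpNorm (⇑f) ⊤ hm * eLpNorm (⇑g) 2 hm).toReal :=
        ENNReal.toReal_mono
          (ENNReal.mul_ne_top (Lp.eLpNorm_ne_top f) (Lp.eLpNorm_ne_top g))
          (eLpNorm_smul_le_eLpNorm_top_mul_eLpNorm 2 (Lp.aestronglyMeasurable g) ⇑f)
    _ = ‖f‖ * ‖g‖ := by rw [ENNReal.toReal_mul]; rfl

/-- The multiplication operator `M_f : L² → L²`, `g ↦ f g`, for a symbol `f ∈ L^∞`. -/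
def mulCL (f : Linf) : L2 →L[ℂ] L2 :=
  LinearMap.mkContinuous
    { toFun := mulFun f
      map_add' := mulFun_add f
      map_smul' := mulFun_smul f }
    ‖f‖ (mulFun_norm f)

/-- The product of two `L^∞` functions, as an element of `L^∞`. -/
def mulInf (f g : Linf) : Linf :=
  ((Lp.memLp g).smul (Lp.memLp f)).toLp (⇑f • ⇑g)

/-- The complex conjugate of an `Lᵖ` function. -/
def conjLp {p : ℝ≥0∞} (f : Lp ℂ p hm) : Lp ℂ p hm :=
  MemLp.toLp (fun x => conj (f x))
    (MemLp.of_le (Lp.memLp f)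
      (RCLike.continuous_conj.comp_aestronglyMeasurable (Lp.aestronglyMeasurable f))
      (Eventually.of_forall fun x => by simp))

/-- The embedding of `L^∞` into `L²` (the measure is finite). -/
def inclL2 (f : Linf) : L2 := MemLp.toLp ⇑f ((Lp.memLp f).mono_exponent le_top)

/-- The constant function `1` in `L^∞`. -/
def oneInf : Linf := Lp.const ⊤ hm (1 : ℂ)

/-- The constant function `1` in `L²`. -/
def oneL2 : L2 := Lp.const 2 hm (1 : ℂ)

/-- `f ∈ L^∞` is constant (a.e.). -/
def IsConst (f : Linf) : Prop := ∃ c : ℂ, f = Lp.const ⊤ hm c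

/-- `θ ∈ L^∞` is an inner function: it is analytic (i.e. lies in `H^∞ = H² ∩ L^∞`)
and has modulus `1` a.e. on the circle. -/
structure IsInner (θ : Linf) : Prop where
  analytic : inclL2 θ ∈ H2
  unimodular : ∀ᵐ x ∂hm, ‖θ x‖ = 1

/-- The complementary projection `I - P` of `L²` onto `[H²]^⊥`. -/
def Qm : L2 →L[ℂ] L2 := ContinuousLinearMap.id ℂ L2 - Pp

/-- The Toeplitz operator `T_f h = P (f h)` with symbol `f ∈ L^∞`, realized as the
endomorphism `P M_f P` of `L²` (i.e. extended by zero on `[H²]^⊥`). -/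
def toep (f : Linf) : L2 →L[ℂ] L2 := Pp ∘L mulCL f ∘L Pp

/-- The Hankel operator `H_f h = (I - P)(f h)` with symbol `f ∈ L^∞`, realized as the
operator `(I-P) M_f P` on `L²` (i.e. extended by zero on `[H²]^⊥`). -/
def hank (f : Linf) : L2 →L[ℂ] L2 := Qm ∘L mulCL f ∘L Pp

/-- The operator `S_f h = (I - P)(f h)` on `[H²]^⊥` with symbol `f ∈ L^∞`, realized as
`(I-P) M_f (I-P)` on `L²` (i.e. extended by zero on `H²`). -/
def sop (f : Linf) : L2 →L[ℂ] L2 := Qm ∘L mulCL f ∘L Qm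

/-- The rank one operator `x ⊗ y : h ↦ ⟨h, y⟩ x`. -/
def rankOne (x y : L2) : L2 →L[ℂ] L2 := (innerSL ℂ y).smulRight x

/-- The subspace `θ H²` of `L²`. -/
def thetaH2 (θ : Linf) : Submodule ℂ L2 := H2.map (mulCL θ).toLinearMap

/-- The model space `K_θ = H² ⊖ θH² = H² ∩ (θH²)^⊥`. -/
def Ktheta (θ : Linf) : Submodule ℂ L2 := H2 ⊓ (thetaH2 θ)ᗮ

/-- The orthogonal projection `P_θ` of `L²` onto the model space `K_θ`, given by the
formula `P_θ f = P f - θ P(conj θ · f)`. -/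
def Pth (θ : Linf) : L2 →L[ℂ] L2 := Pp - mulCL θ ∘L Pp ∘L mulCL (conjLp θ)

/-- The truncated Toeplitz operator `A^θ_φ u = P_θ(φ u)` with symbol `φ ∈ L²`, applied to a
bounded function `u` (in the statements, `u` ranges over `K_θ ∩ H^∞`). -/
def ttoepApply (θ : Linf) (φ : L2) (u : Linf) : L2 := Pth θ (mulCL u φ)

/-- The truncated Hankel operator `H^θ_φ u = (I - P_θ)(φ u)` with symbol `φ ∈ L²`, applied to
a bounded function `u` (in the statements, `u` ranges over `K_θ ∩ H^∞`). -/
def thankApply (θ : Linf) (φ : L2) (u : Linf) : L2 := mulCL u φ - Pth θ (mulCL u φ)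

/-- The truncated Toeplitz operator `A^θ_f = P_θ M_f P_θ` with bounded symbol `f ∈ L^∞`,
extended by zero on the orthogonal complement of `K_θ`. -/
def ttoep (θ f : Linf) : L2 →L[ℂ] L2 := Pth θ ∘L mulCL f ∘L Pth θ

/-- The truncated Hankel operator `H^θ_f = (I - P_θ) M_f P_θ` with bounded symbol `f ∈ L^∞`,
extended by zero on the orthogonal complement of `K_θ`. -/
def thank (θ f : Linf) : L2 →L[ℂ] L2 :=
  (ContinuousLinearMap.id ℂ L2 - Pth θ) ∘L mulCL f ∘L Pth θ

/-- The antiunitary operator `V` on `L²`: `(V f)(w) = conj w * conj (f w)`. -/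
def Vop (f : L2) : L2 := mulCL (fourierLp ⊤ (-1)) (conjLp f)

theorem negMP : MeasurePreserving (fun x : Circ => -x) hm hm :=
  Measure.measurePreserving_neg hm

/-- The unitary operator `U` on `L²`: `(U f)(w) = conj w * f (conj w)`. -/
def Uop (f : L2) : L2 :=
  mulCL (fourierLp ⊤ (-1)) (Lp.compMeasurePreserving (fun x : Circ => -x) negMP f)

/-- The normalized reproducing kernel `k_z(w) = √(1-|z|²) / (1 - conj z * w)` of `H²`,
as a continuous function on the circle (`w = e^{ix}`). -/
def kC (z : ℂ) (hz : ‖z‖ < 1) : C(Circ, ℂ) :=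
  ⟨fun x => (Real.sqrt (1 - ‖z‖ ^ 2) : ℂ) / (1 - conj z * fourier 1 x), by
    apply Continuous.div continuous_const
    · exact Continuous.sub continuous_const (Continuous.mul continuous_const (map_continuous _))
    · intro x
      refine sub_ne_zero.2 fun h => absurd (congrArg norm h) ?_
      have h1 : ‖fourier 1 x‖ = 1 := Circle.norm_coe _
      simp only [norm_mul, RCLike.norm_conj, h1, mul_one, norm_one]
      exact fun hc => absurd hc.symm (ne_of_lt hz)⟩

open Classical in
/-- The normalized reproducing kernel `k_z` as an element of `L²` (junk value `0` if `|z| ≥ 1`). -/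
def kLp (z : ℂ) : L2 :=
  if hz : ‖z‖ < 1 then ContinuousMap.toLp 2 hm ℂ (kC z hz) else 0

/-- The Möbius transform `φ_z(w) = (z - w)/(1 - conj z * w)`, as a continuous function. -/
def phiC (z : ℂ) (hz : ‖z‖ < 1) : C(Circ, ℂ) :=
  ⟨fun x => (z - fourier 1 x) / (1 - conj z * fourier 1 x), by
    apply Continuous.div
    · exact Continuous.sub continuous_const (map_continuous _)
    · exact Continuous.sub continuous_const (Continuous.mul continuous_const (map_continuous _))
    · intro x
      refine sub_ne_zero.2 fun h => absurd (congrArg norm h) ?_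
      have h1 : ‖fourier 1 x‖ = 1 := Circle.norm_coe _
      simp only [norm_mul, RCLike.norm_conj, h1, mul_one, norm_one]
      exact fun hc => absurd hc.symm (ne_of_lt hz)⟩

open Classical in
/-- The Möbius transform `φ_z` as an element of `L^∞` (junk value `0` if `|z| ≥ 1`). -/
def phiInf (z : ℂ) : Linf :=
  if hz : ‖z‖ < 1 then ContinuousMap.toLp ⊤ hm ℂ (phiC z hz) else 0

/-- The filter of tangential approach `|z| → 1⁻` inside the unit disk. -/
def toBoundary : Filter ℂ := Filter.comap (fun z => ‖z‖) (𝓝[<] (1 : ℝ))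

/-- Membership in `K_θ + ℂθ = {h ∈ H² : θ conj h ∈ H²}`. -/
def MemKC (θ : Linf) (h : L2) : Prop := h ∈ H2 ∧ mulCL θ (conjLp h) ∈ H2


/- Auxiliary lemmas for statement 9. -/

theorem coeffCLM_apply' (k : ℤ) (v : L2) : coeffCLM k v = fourierBasis.repr v k := rfl

theorem coeffCLM_eq_fourierCoeff (k : ℤ) (v : L2) : coeffCLM k v = fourierCoeff (⇑v) k :=
  fourierBasis_repr v k

theorem fourierCoeff_congr_ae {u v : Circ → ℂ} (h : u =ᵐ[hm] v) (k : ℤ) :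
    fourierCoeff u k = fourierCoeff v k := by
  unfold fourierCoeff
  exact integral_congr_ae (h.mono fun x hx => by simp only [hx])

theorem mem_H2_iff (v : L2) : v ∈ H2 ↔ ∀ m : ℤ, m < 0 → coeffCLM m v = 0 := by
  constructor
  · intro hv m hmneg
    exact (Submodule.mem_iInf _).mp hv ⟨m, hmneg⟩
  · intro h
    exact (Submodule.mem_iInf _).mpr fun n => h n.1 n.2

theorem fourierBasis_mem_H2 {k : ℤ} (hk : 0 ≤ k) :
    ((fourierBasis : HilbertBasis ℤ ℂ L2) k) ∈ H2 := by
  classical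
  rw [mem_H2_iff]
  intro m hmneg
  rw [coeffCLM_apply', (fourierBasis : HilbertBasis ℤ ℂ L2).repr_self k,
    lp.single_apply, Pi.single_apply, if_neg (by omega)]

/-- If `Pp v = 0` then all nonnegative Fourier coefficients of `v` vanish. -/
theorem coeff_eq_zero_of_Pp_eq_zero {v : L2} (hv : Pp v = 0) {k : ℤ} (hk : 0 ≤ k) :
    coeffCLM k v = 0 := by
  have h0 : H2.orthogonalProjectionOnto v = 0 := by
    have : ((H2.orthogonalProjectionOnto v : H2) : L2) = 0 := hv
    exact Subtype.ext this
  have hperp : v ∈ H2ᗮ := Submodule.orthogonalProjectionOnto_eq_zero_iff.mp h0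
  rw [coeffCLM_apply', (fourierBasis : HilbertBasis ℤ ℂ L2).repr_apply_apply v k]
  exact (Submodule.mem_orthogonal H2 v).mp hperp _ (fourierBasis_mem_H2 hk)

/-- The key Fourier-coefficient identity for `z̄ ḡ`. -/
theorem coeff_conj_shift (g : L2) (k : ℤ) :
    coeffCLM k (mulCL (fourierLp ⊤ (-1)) (conjLp g)) = conj (coeffCLM (-(k + 1)) g) := by
  rw [coeffCLM_eq_fourierCoeff, coeffCLM_eq_fourierCoeff]
  have hae : (⇑(mulCL (fourierLp ⊤ (-1)) (conjLp g)) : Circ → ℂ)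
      =ᵐ[hm] fun x => fourier (-1) x * conj (g x) := by
    filter_upwards [(coeFn_mulFun (fourierLp ⊤ (-1)) (conjLp g) :
        ⇑(mulCL (fourierLp ⊤ (-1)) (conjLp g)) =ᵐ[hm] ⇑(fourierLp ⊤ (-1)) • ⇑(conjLp g)),
      coeFn_fourierLp (T := 2 * Real.pi) ⊤ (-1),
      (MemLp.coeFn_toLp (μ := hm) (p := 2)
        (MemLp.of_le (Lp.memLp g)
          (RCLike.continuous_conj.comp_aestronglyMeasurable (Lp.aestronglyMeasurable g))
          (Eventually.of_forall fun x => by simp)) :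
        ⇑(conjLp g) =ᵐ[hm] fun x => conj (g x))] with x h1 h2 h3
    show (⇑(mulFun (fourierLp ⊤ (-1)) (conjLp g)) : Circ → ℂ) x = fourier (-1) x * conj (g x)
    rw [h1, Pi.smul_apply', smul_eq_mul, h2,
      show (⇑(conjLp g) : Circ → ℂ) x = conj (g x) from h3]
  rw [fourierCoeff_congr_ae hae]
  unfold fourierCoeff
  rw [← integral_conj]
  apply integral_congr_ae
  apply Eventually.of_forall
  intro x
  show fourier (-k) x • (fourier (-1) x * conj (g x)) = conj (fourier (-(-(k + 1))) x • (g x))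
  have h1 : (-(-(k + 1)) : ℤ) = k + 1 := by ring
  have h2 : (-(k + 1) : ℤ) = -k + -1 := by ring
  rw [h1, smul_eq_mul, smul_eq_mul, map_mul, ← fourier_neg, h2, fourier_add, ← mul_assoc]

/-- If `f₁, …, f_n, g₁, …, g_n ∈ L²`, the images `π(f_i)` in `L²/H²` are
linearly independent, and `Σ (H_{f_i}1) ⊗ (H_{g_i}* z̄) = 0`, then every `g_i ∈ H²`.
(Here `H_φ 1 = (I−P)φ` and `H_φ* z̄ = P(φ̄ z̄)`, `z̄` being the function `w ↦ conj w`.) -/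
theorem statement_9 (n : ℕ) (f g : Fin n → L2)
    (hind : LinearIndependent ℂ (fun i => H2.mkQ (f i)))
    (hzero : ∑ i, rankOne (f i - Pp (f i))
        (Pp (mulCL (fourierLp ⊤ (-1)) (conjLp (g i)))) = 0) :
    ∀ i, g i ∈ H2 := by
  -- Step 1: the vectors `f i - Pp (f i)` are linearly independent.
  have hind2 : LinearIndependent ℂ (fun i => f i - Pp (f i)) := by
    apply LinearIndependent.of_comp H2.mkQ
    have heq : (H2.mkQ ∘ fun i => f i - Pp (f i)) = fun i => H2.mkQ (f i) := by
      funext j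
      have hmem : Pp (f j) ∈ H2 := (H2.orthogonalProjectionOnto (f j)).2
      have hz : H2.mkQ (Pp (f j)) = 0 := by
        rw [Submodule.mkQ_apply]
        exact (Submodule.Quotient.mk_eq_zero H2).mpr hmem
      simp only [Function.comp_apply, map_sub, hz, sub_zero]
    rw [heq]
    exact hind
  -- Step 2: each right-hand vector of the rank-one sum vanishes.
  have hy : ∀ j, Pp (mulCL (fourierLp ⊤ (-1)) (conjLp (g j))) = 0 := by
    set y : Fin n → L2 := fun j => Pp (mulCL (fourierLp ⊤ (-1)) (conjLp (g j))) with hydef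
    have hzero' : ∀ h : L2, ∑ i, (inner ℂ (y i) h : ℂ) • (f i - Pp (f i)) = 0 := by
      intro h
      have := congrArg (fun T : L2 →L[ℂ] L2 => T h) hzero
      simpa [rankOne, ContinuousLinearMap.sum_apply] using this
    intro j
    have hinner : ∀ h : L2, (inner ℂ (y j) h : ℂ) = 0 := fun h =>
      Fintype.linearIndependent_iff.mp hind2 _ (hzero' h) j
    have := hinner (y j)
    rwa [inner_self_eq_zero] at this
  -- Step 3: conclude each `g i ∈ H²` from vanishing Fourier coefficients.
  intro i
  rw [mem_H2_iff]
  intro m hmneg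
  have hk : (0 : ℤ) ≤ -m - 1 := by omega
  have h1 : coeffCLM (-m - 1) (mulCL (fourierLp ⊤ (-1)) (conjLp (g i))) = 0 :=
    coeff_eq_zero_of_Pp_eq_zero (hy i) hk
  rw [coeff_conj_shift] at h1
  have h2 : (-(-m - 1 + 1) : ℤ) = m := by omega
  rw [h2] at h1
  exact star_eq_zero.mp h1

end HTTO
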